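/- If f : ℝ^p → ℝ is σ-strongly convex and differentiable with L-Lipschitz gradient, then for all x, y, ⟨x - y, ∇f(x) - ∇f(y)⟩ ≥ (1/(σ+L)) ‖∇f(x) - ∇f(y)‖² + (σL/(σ+L)) ‖x - y‖². -/

import Mathlib

local notation "⟪" x ", " y "⟫" => @inner ℝ _ _ x y

/-!
The function `h = f - σ/2 ‖·‖²` has the monotone gradient `∇h = f' - σ • id` and satisfies the
quadratic upper bound with constant `L - σ`. Comparing `h` at `x`, `y` and
`x - t • (∇h x - ∇h y)` shows that a quadratic polynomial in `t` is nonnegative, and its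
discriminant yields cocoercivity `‖∇h x - ∇h y‖² ≤ (L - σ) ⟪∇h x - ∇h y, x - y⟫`.
Expanding `∇h` turns this into the claimed inequality.
-/

open Set

lemma add_deriv_add_half_le_of_le_deriv_sub {φ φ' : ℝ → ℝ} {κ : ℝ}
    (hφ : ∀ t, HasDerivAt φ (φ' t) t) (hκ : ∀ t ∈ Ioo (0 : ℝ) 1, κ * t ≤ φ' t - φ' 0) :
    φ 0 + φ' 0 + κ / 2 ≤ φ 1 := by
  have hψ : ∀ t, HasDerivAt (fun s => φ s - s * φ' 0 - κ / 2 * s ^ 2) (φ' t - φ' 0 - κ * t) t :=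
    fun t => (((hφ t).sub ((hasDerivAt_id t).mul_const _)).sub
      ((hasDerivAt_pow 2 t).const_mul (κ / 2))).congr_deriv (by ring)
  have hmono : MonotoneOn (fun s => φ s - s * φ' 0 - κ / 2 * s ^ 2) (Icc 0 1) :=
    monotoneOn_of_hasDerivWithinAt_nonneg (convex_Icc 0 1)
      (fun t _ => (hψ t).continuousAt.continuousWithinAt) (fun t _ => (hψ t).hasDerivWithinAt)
      (fun t ht => by rw [interior_Icc] at ht; linarith [hκ t ht])
  have := hmono (left_mem_Icc.2 zero_le_one) (right_mem_Icc.2 zero_le_one) zero_le_one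
  simp only at this
  linarith

variable {E : Type*} [NormedAddCommGroup E] [InnerProductSpace ℝ E]

lemma le_of_mul_sq_le_inner_of_norm_le_mul {u v : E} {σ L : ℝ} (hu : u ≠ 0)
    (hσ : σ * ‖u‖ ^ 2 ≤ ⟪v, u⟫) (hL : ‖v‖ ≤ L * ‖u‖) : σ ≤ L := by
  have hu' : 0 < ‖u‖ ^ 2 := by positivity
  refine le_of_mul_le_mul_right ?_ hu'
  nlinarith [real_inner_le_norm v u, norm_nonneg u]

section Cocoercivity

variable {h : E → ℝ} {h' : E → E} {Λ : ℝ}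
  (hlow : ∀ x y, h x + ⟪h' x, y - x⟫ ≤ h y)
  (hup : ∀ x y, h y ≤ h x + ⟪h' x, y - x⟫ + Λ / 2 * ‖y - x‖ ^ 2)
include hlow hup

lemma add_inner_add_mul_norm_sub_sq_le (x y : E) (t : ℝ) :
    h y + ⟪h' y, x - y⟫ + (t - Λ / 2 * t ^ 2) * ‖h' x - h' y‖ ^ 2 ≤ h x := by
  set g := h' x - h' y
  have hy := hlow y (x - t • g)
  have hx := hup x (x - t • g)
  rw [sub_right_comm, inner_sub_right, real_inner_smul_right] at hy
  rw [sub_sub_cancel_left, inner_neg_right, real_inner_smul_right, norm_neg, norm_smul, mul_pow,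
    Real.norm_eq_abs, sq_abs] at hx
  have hg : ⟪h' x, g⟫ - ⟪h' y, g⟫ = ‖g‖ ^ 2 := by
    rw [← inner_sub_left, real_inner_self_eq_norm_sq]
  linear_combination hy + hx - t * hg

lemma norm_sub_sq_le_mul_inner_of_bounds (hΛ : 0 ≤ Λ) (x y : E) :
    ‖h' x - h' y‖ ^ 2 ≤ Λ * ⟪h' x - h' y, x - y⟫ := by
  have hquad : ∀ t, 0 ≤ Λ * ‖h' x - h' y‖ ^ 2 * (t * t) + -2 * ‖h' x - h' y‖ ^ 2 * t
      + ⟪h' x - h' y, x - y⟫ := fun t => by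
    have hxy := add_inner_add_mul_norm_sub_sq_le hlow hup x y t
    have hyx := add_inner_add_mul_norm_sub_sq_le hlow hup y x t
    rw [norm_sub_rev] at hyx
    simp only [inner_sub_left, inner_sub_right] at hxy hyx ⊢
    linear_combination hxy + hyx
  have hmono : 0 ≤ ⟪h' x - h' y, x - y⟫ := by
    have := add_le_add (hlow x y) (hlow y x)
    simp only [inner_sub_left, inner_sub_right] at this ⊢
    linarith
  have hdisc := discrim_le_zero hquad
  rw [discrim] at hdisc
  nlinarith [sq_nonneg (‖h' x - h' y‖), mul_nonneg hΛ hmono]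

end Cocoercivity

lemma inner_ge_of_norm_sub_smul_sq_le {u v : E} {σ L : ℝ} (hσL : 0 < σ + L)
    (h : ‖v - σ • u‖ ^ 2 ≤ (L - σ) * ⟪v - σ • u, u⟫) :
    1 / (σ + L) * ‖v‖ ^ 2 + σ * L / (σ + L) * ‖u‖ ^ 2 ≤ ⟪u, v⟫ := by
  rw [norm_sub_sq_real, inner_sub_left, real_inner_smul_left, real_inner_smul_right, norm_smul,
    real_inner_self_eq_norm_sq, real_inner_comm, mul_pow, Real.norm_eq_abs, sq_abs] at h
  calc 1 / (σ + L) * ‖v‖ ^ 2 + σ * L / (σ + L) * ‖u‖ ^ 2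
      = (‖v‖ ^ 2 + σ * L * ‖u‖ ^ 2) / (σ + L) := by field_simp
    _ ≤ ⟪u, v⟫ := by rw [div_le_iff₀ hσL]; linarith

variable [CompleteSpace E]

lemma HasGradientAt.neg {f : E → ℝ} {g x : E} (hf : HasGradientAt f g x) :
    HasGradientAt (-f) (-g) x := by
  rw [hasGradientAt_iff_hasFDerivAt, map_neg]
  exact hf.hasFDerivAt.neg

lemma HasGradientAt.hasDerivAt_comp_add_smul {f : E → ℝ} {g x d : E} {t : ℝ}
    (hf : HasGradientAt f g (x + t • d)) :
    HasDerivAt (fun s : ℝ => f (x + s • d)) ⟪g, d⟫ t := by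
  have hline : HasDerivAt (fun s : ℝ => x + s • d) d t := by
    simpa using ((hasDerivAt_id t).smul_const d).const_add x
  simpa [InnerProductSpace.toDual_apply_apply, Function.comp_def] using
    hf.hasFDerivAt.comp_hasDerivAt t hline

lemma HasGradientAt.sub_half_mul_norm_sq {f : E → ℝ} {g x : E} (hf : HasGradientAt f g x)
    (c : ℝ) : HasGradientAt (fun z => f z - c / 2 * ‖z‖ ^ 2) (g - c • x) x := by
  rw [hasGradientAt_iff_hasFDerivAt] at hf ⊢
  refine (hf.fun_sub ((hasStrictFDerivAt_norm_sq x).hasFDerivAt.const_mul (c / 2))).congr_fderiv ?_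
  ext v
  simp only [sub_apply, InnerProductSpace.toDual_apply_apply,
    smul_apply, coe_innerSL_apply, inner_sub_left, real_inner_smul_left,
    nsmul_eq_mul, smul_eq_mul]
  ring

lemma add_inner_add_mul_sq_le_of_mul_sq_le_inner {f : E → ℝ} {f' : E → E} {κ : ℝ}
    (hgrad : ∀ x, HasGradientAt f (f' x) x)
    (hκ : ∀ x y, κ * ‖x - y‖ ^ 2 ≤ ⟪f' x - f' y, x - y⟫) (x y : E) :
    f x + ⟪f' x, y - x⟫ + κ / 2 * ‖y - x‖ ^ 2 ≤ f y := by
  have h := add_deriv_add_half_le_of_le_deriv_sub (κ := κ * ‖y - x‖ ^ 2)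
    (fun t => (hgrad (x + t • (y - x))).hasDerivAt_comp_add_smul) fun t ht => by
      have hxt := hκ (x + t • (y - x)) x
      rw [add_sub_cancel_left, real_inner_smul_right, norm_smul, Real.norm_of_nonneg ht.1.le]
        at hxt
      rw [zero_smul, add_zero, ← inner_sub_left]
      nlinarith [ht.1]
  simpa [mul_div_right_comm] using h

lemma le_add_inner_add_mul_sq_of_inner_le_mul_sq {f : E → ℝ} {f' : E → E} {κ : ℝ}
    (hgrad : ∀ x, HasGradientAt f (f' x) x)
    (hκ : ∀ x y, ⟪f' x - f' y, x - y⟫ ≤ κ * ‖x - y‖ ^ 2) (x y : E) :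
    f y ≤ f x + ⟪f' x, y - x⟫ + κ / 2 * ‖y - x‖ ^ 2 := by
  have h := add_inner_add_mul_sq_le_of_mul_sq_le_inner (f := -f) (f' := -f') (κ := -κ)
    (fun x => (hgrad x).neg) (fun x y => by
      rw [Pi.neg_apply, Pi.neg_apply, neg_sub_neg, ← neg_sub (f' x), inner_neg_left]
      linarith [hκ x y]) x y
  simp only [Pi.neg_apply, inner_neg_left] at h
  linarith

theorem stmt1_general {p : ℕ} (f : EuclideanSpace ℝ (Fin p) → ℝ)
    (f' : EuclideanSpace ℝ (Fin p) → EuclideanSpace ℝ (Fin p))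
    (hgrad : ∀ x, HasGradientAt f (f' x) x)
    (σ L : ℝ) (hσ : 0 < σ)
    (hsc : ∀ x y, ⟪f' x - f' y, x - y⟫ ≥ σ * ‖x - y‖ ^ 2)
    (hlip : ∀ x y, ‖f' x - f' y‖ ≤ L * ‖x - y‖) :
    ∀ x y, ⟪x - y, f' x - f' y⟫ ≥
      (1 / (σ + L)) * ‖f' x - f' y‖ ^ 2 + (σ * L / (σ + L)) * ‖x - y‖ ^ 2 := by
  intro x y
  rcases eq_or_ne x y with rfl | hxy
  · simp
  have hσL : σ ≤ L :=
    le_of_mul_sq_le_inner_of_norm_le_mul (sub_ne_zero.2 hxy) (hsc x y) (hlip x y)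
  have hgrad' (z) := (hgrad z).sub_half_mul_norm_sq σ
  have hshift (u v : EuclideanSpace ℝ (Fin p)) :
      ⟪(f' u - σ • u) - (f' v - σ • v), u - v⟫ = ⟪f' u - f' v, u - v⟫ - σ * ‖u - v‖ ^ 2 := by
    rw [sub_sub_sub_comm, ← smul_sub, inner_sub_left, real_inner_smul_left,
      real_inner_self_eq_norm_sq]
  have hlow (u v : EuclideanSpace ℝ (Fin p)) := by
    simpa using add_inner_add_mul_sq_le_of_mul_sq_le_inner hgrad' (κ := 0)
      (fun u v => by rw [hshift]; linarith [hsc u v]) u v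
  have hup := le_add_inner_add_mul_sq_of_inner_le_mul_sq hgrad' (κ := L - σ) fun u v => by
    rw [hshift]
    nlinarith [real_inner_le_norm (f' u - f' v) (u - v), hlip u v, norm_nonneg (u - v)]
  have hcoco := norm_sub_sq_le_mul_inner_of_bounds hlow hup (sub_nonneg.2 hσL) x y
  rw [sub_sub_sub_comm, ← smul_sub] at hcoco
  exact inner_ge_of_norm_sub_smul_sq_le (by linarith) hcoco

theorem stmt1 {p : ℕ} (f : EuclideanSpace ℝ (Fin p) → ℝ)
    (f' : EuclideanSpace ℝ (Fin p) → EuclideanSpace ℝ (Fin p))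
    (hgrad : ∀ x, HasGradientAt f (f' x) x)
    (σ L : ℝ) (hσ : 0 < σ) (hL : 0 < L)
    (hsc : ∀ x y, ⟪f' x - f' y, x - y⟫ ≥ σ * ‖x - y‖ ^ 2)
    (hlip : ∀ x y, ‖f' x - f' y‖ ≤ L * ‖x - y‖) :
    ∀ x y, ⟪x - y, f' x - f' y⟫ ≥
      (1 / (σ + L)) * ‖f' x - f' y‖ ^ 2 + (σ * L / (σ + L)) * ‖x - y‖ ^ 2 :=
  stmt1_general f f' hgrad σ L hσ hsc hlip
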